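/- Let g, Δ, ε, λ be real numbers, μ := (λ+g²)² − 4g²(λ+g²) − Δ², and set a := −(λ+g²−1+ε), α := −½ − (λ+g²+ε)/2, β := 4g², γ := −(λ+g²−ε)/2, C := μ − 4εg² − ε², and Λ̃ := β(a/2 + α) + γ(a − ½). Then for every real x > 0 with x ≠ 1 and every twice continuously differentiable f : (0,∞) → ℝ, one has x^{−(a−1/2)/2} · ((ϖ_a(K) − Λ̃)(t ↦ t^{(a−1/2)/2} f(t)))(x) = x(x−1)·f″(x) + [−4g²·x(x−1) − ((λ+g²) + ε)(x−1) + (1 − (λ+g²) + ε)x]·f′(x) + [4g²(λ+g²−1+ε)x + μ − 4εg² − ε²]·f(x); the right-hand side is x(x−1) times the confluent Heun operator H₂^ε(λ) applied to f. -/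

import Mathlib

open Real

/-- The first order operator `B : g ↦ −g′ + (½(a−½)x⁻¹ + β)·g`. -/
noncomputable def Bop (a β : ℝ) (g : ℝ → ℝ) : ℝ → ℝ := fun x =>
  -deriv g x + ((1 / 2) * (a - 1 / 2) * x⁻¹ + β) * g x

/-- The first order operator `A : h ↦ x·h′ + ¼·h − x²·h′ − ½(a+½)x·h + α·h`. -/
noncomputable def Aop (a α : ℝ) (h : ℝ → ℝ) : ℝ → ℝ := fun x =>
  x * deriv h x + (1 / 4) * h x - x ^ 2 * deriv h x - (1 / 2) * (a + 1 / 2) * x * h x + α * h x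

/-- The second order operator `ϖ_a(K(α,β,γ;C)) : g ↦ A(Bg) + 2γ·x·g′ + C·g`. -/
noncomputable def piK (a α β γ C : ℝ) (g : ℝ → ℝ) : ℝ → ℝ := fun x =>
  Aop a α (Bop a β g) x + 2 * γ * x * deriv g x + C * g x

/-- The constant `λ_a(α,β,γ) = β(a/2 + α) + γ(a − ½)`. -/
noncomputable def lamConst (a α β γ : ℝ) : ℝ := β * (a / 2 + α) + γ * (a - 1 / 2)

/-!
Conjugation by `x ^ e` turns `d/dx` into `d/dx + e x⁻¹`. For `e = (a - ½)/2` this cancels the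
singular term `½(a - ½)x⁻¹` of `B`, which becomes `β - d/dx`, so `ϖ_a(K)` conjugates to an explicit
second order operator with polynomial coefficients; inserting the parameters and collecting terms
gives `x(x-1)H₂^ε(λ)`.
-/

open Filter Topology

theorem deriv_rpow_mul {f : ℝ → ℝ} {x : ℝ} (e : ℝ) (hx : 0 < x) (hf : DifferentiableAt ℝ f x) :
    deriv (fun t => t ^ e * f t) x = x ^ e * (deriv f x + e * x⁻¹ * f x) := by
  rw [((hasDerivAt_rpow_const (Or.inl hx.ne')).fun_mul hf.hasDerivAt).deriv,
    rpow_sub hx, rpow_one]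
  ring

theorem Bop_rpow_mul (a β : ℝ) {f : ℝ → ℝ} {x : ℝ} (hx : 0 < x) (hf : DifferentiableAt ℝ f x) :
    Bop a β (fun t => t ^ ((a - 1 / 2) / 2) * f t) x =
      x ^ ((a - 1 / 2) / 2) * (β * f x - deriv f x) := by
  rw [Bop, deriv_rpow_mul _ hx hf]
  ring

theorem Aop_congr_of_eventuallyEq (a α : ℝ) {h₁ h₂ : ℝ → ℝ} {x : ℝ} (h : h₁ =ᶠ[𝓝 x] h₂) :
    Aop a α h₁ x = Aop a α h₂ x := by
  rw [Aop, Aop, h.deriv_eq, h.eq_of_nhds]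

theorem Aop_rpow_mul (a α e : ℝ) {h : ℝ → ℝ} {x : ℝ} (hx : 0 < x) (hh : DifferentiableAt ℝ h x) :
    Aop a α (fun t => t ^ e * h t) x =
      x ^ e * (x * (1 - x) * (deriv h x + e * x⁻¹ * h x) +
        (1 / 4 - 1 / 2 * (a + 1 / 2) * x + α) * h x) := by
  rw [Aop, deriv_rpow_mul _ hx hh]
  ring

theorem piK_rpow_mul (a α β γ C : ℝ) {f : ℝ → ℝ} {x : ℝ} (hx : 0 < x)
    (hf : ∀ᶠ t in 𝓝 x, DifferentiableAt ℝ f t) (hf' : DifferentiableAt ℝ (deriv f) x) :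
    piK a α β γ C (fun t => t ^ ((a - 1 / 2) / 2) * f t) x =
      x ^ ((a - 1 / 2) / 2) *
        (x * (1 - x) * (β * deriv f x - deriv (deriv f) x +
            (a - 1 / 2) / 2 * x⁻¹ * (β * f x - deriv f x)) +
          (1 / 4 - 1 / 2 * (a + 1 / 2) * x + α) * (β * f x - deriv f x) +
          2 * γ * x * (deriv f x + (a - 1 / 2) / 2 * x⁻¹ * f x) + C * f x) := by
  have hB : Bop a β (fun t => t ^ ((a - 1 / 2) / 2) * f t) =ᶠ[𝓝 x]
      fun t => t ^ ((a - 1 / 2) / 2) * (β * f t - deriv f t) := by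
    filter_upwards [Ioi_mem_nhds hx, hf] with t ht hft using Bop_rpow_mul a β ht hft
  have hh : HasDerivAt (fun t => β * f t - deriv f t)
      (β * deriv f x - deriv (deriv f) x) x :=
    (hf.self_of_nhds.hasDerivAt.const_mul β).sub hf'.hasDerivAt
  rw [piK, Aop_congr_of_eventuallyEq a α hB, Aop_rpow_mul _ _ _ hx hh.differentiableAt,
    hh.deriv, deriv_rpow_mul _ hx hf.self_of_nhds]
  ring

theorem piK_confluentHeun_two_general (g Δ ε lam : ℝ)
    (μ : ℝ) (hμ : μ = (lam + g ^ 2) ^ 2 - 4 * g ^ 2 * (lam + g ^ 2) - Δ ^ 2)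
    (a α β γ C Λ : ℝ)
    (ha : a = -(lam + g ^ 2 - 1 + ε))
    (hα : α = -(1 / 2) - (lam + g ^ 2 + ε) / 2)
    (hβ : β = 4 * g ^ 2)
    (hγ : γ = -((lam + g ^ 2 - ε) / 2))
    (hC : C = μ - 4 * ε * g ^ 2 - ε ^ 2)
    (hΛ : Λ = β * (a / 2 + α) + γ * (a - 1 / 2))
    (x : ℝ) (hx : 0 < x)
    (f : ℝ → ℝ) (hf : ContDiffOn ℝ 2 f (Set.Ioi (0 : ℝ))) :
    x ^ (-(a - 1 / 2) / 2) *
        (piK a α β γ C (fun t : ℝ => t ^ ((a - 1 / 2) / 2) * f t) x -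
          Λ * ((fun t : ℝ => t ^ ((a - 1 / 2) / 2) * f t) x)) =
      x * (x - 1) * deriv (deriv f) x +
        (-(4 * g ^ 2) * (x * (x - 1)) - ((lam + g ^ 2) + ε) * (x - 1) +
          (1 - (lam + g ^ 2) + ε) * x) * deriv f x +
        (4 * g ^ 2 * (lam + g ^ 2 - 1 + ε) * x + μ - 4 * ε * g ^ 2 - ε ^ 2) * f x := by
  have hf₁ : ∀ᶠ t in 𝓝 x, DifferentiableAt ℝ f t := by
    filter_upwards [Ioi_mem_nhds hx] with t ht
    exact (hf.contDiffAt (Ioi_mem_nhds ht)).differentiableAt two_ne_zero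
  have hf₂ : DifferentiableAt ℝ (deriv f) x :=
    ((hf.deriv_of_isOpen isOpen_Ioi one_add_one_eq_two.le).contDiffAt
      (Ioi_mem_nhds hx)).differentiableAt one_ne_zero
  rw [piK_rpow_mul a α β γ C hx hf₁ hf₂, neg_div, rpow_neg hx.le]
  have hxe : x ^ ((a - 1 / 2) / 2) ≠ 0 := (rpow_pos_of_pos hx _).ne'
  subst hμ hC hΛ hα hβ hγ ha
  field_simp
  ring

/-- The confluent Heun picture of `ϖ_a(K) − Λ̃` for the second choice of parameters:
conjugation by `x^{(a−1/2)/2}` turns it into `x(x−1)` times the confluent Heun operator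
`H₂^ε(λ)` of the asymmetric quantum Rabi model. -/
theorem piK_confluentHeun_two (g Δ ε lam : ℝ)
    (μ : ℝ) (hμ : μ = (lam + g ^ 2) ^ 2 - 4 * g ^ 2 * (lam + g ^ 2) - Δ ^ 2)
    (a α β γ C Λ : ℝ)
    (ha : a = -(lam + g ^ 2 - 1 + ε))
    (hα : α = -(1 / 2) - (lam + g ^ 2 + ε) / 2)
    (hβ : β = 4 * g ^ 2)
    (hγ : γ = -((lam + g ^ 2 - ε) / 2))
    (hC : C = μ - 4 * ε * g ^ 2 - ε ^ 2)
    (hΛ : Λ = β * (a / 2 + α) + γ * (a - 1 / 2))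
    (x : ℝ) (hx : 0 < x) (hx1 : x ≠ 1)
    (f : ℝ → ℝ) (hf : ContDiffOn ℝ 2 f (Set.Ioi (0 : ℝ))) :
    x ^ (-(a - 1 / 2) / 2) *
        (piK a α β γ C (fun t : ℝ => t ^ ((a - 1 / 2) / 2) * f t) x -
          Λ * ((fun t : ℝ => t ^ ((a - 1 / 2) / 2) * f t) x)) =
      x * (x - 1) * deriv (deriv f) x +
        (-(4 * g ^ 2) * (x * (x - 1)) - ((lam + g ^ 2) + ε) * (x - 1) +
          (1 - (lam + g ^ 2) + ε) * x) * deriv f x +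
        (4 * g ^ 2 * (lam + g ^ 2 - 1 + ε) * x + μ - 4 * ε * g ^ 2 - ε ^ 2) * f x :=
  piK_confluentHeun_two_general g Δ ε lam μ hμ a α β γ C Λ ha hα hβ hγ hC hΛ x hx f hf
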